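/- arXiv:1202.0667 — 6 statements merged into one kernel-verified Lean document; each statement's English description precedes it below -/
import Mathlib

section
/- Let G be a finite simple graph with chromatic number χ(G) = r and coloring number at most k, i.e., there is a linear ordering v₁, …, vₙ of the vertices of G such that every vertex vᵢ has at most k − 1 neighbors among v₁, …, v_{i−1}. Let n₁, …, n_r be pairwise coprime positive integers with nᵢ ≥ k for all i = 1, …, r. Then η(G) ≤ n₁ · n₂ · ⋯ · n_r, i.e., G has an additive coloring using the labels {1, 2, …, n₁ · n₂ · ⋯ · n_r}. -/
/-- The sum of the values of `f` over the neighborhood of `u` in `G`. -/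
noncomputable def nsum {V : Type*} [Fintype V] {M : Type*} [AddCommMonoid M]
    (G : SimpleGraph V) (f : V → M) (u : V) : M :=
  letI := Classical.decRel G.Adj
  ∑ x ∈ G.neighborFinset u, f x

/-- `G` has an additive coloring using the labels `{1, 2, …, k}`. -/
def HasAddColoring {V : Type*} [Fintype V] (G : SimpleGraph V) (k : ℕ) : Prop :=
  ∃ f : V → ℕ, (∀ v, f v ∈ Finset.Icc 1 k) ∧
    ∀ ⦃u v : V⦄, G.Adj u v → nsum G f u ≠ nsum G f v

/-- `η(G)`: the least `k` such that `G` has an additive coloring with labels `{1, …, k}`. -/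
noncomputable def eta {V : Type*} [Fintype V] (G : SimpleGraph V) : ℕ :=
  sInf {k | HasAddColoring G k}

open Finset in
private lemma greedy_aux {V : Type*} [Fintype V] [DecidableEq V] (G : SimpleGraph V)
    [DecidableRel G.Adj] {r k : ℕ} (c : V → Fin r) (n : Fin r → ℕ)
    (hk : ∀ i, k ≤ n i)
    (e : Fin (Fintype.card V) ≃ V)
    (he : ∀ i : Fin (Fintype.card V),
      (Finset.univ.filter fun j => j < i ∧ G.Adj (e i) (e j)).card < k)
    (t : ℕ) :
    ∃ g : V → ℕ, ∀ (u : V) (j : Fin r),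
      (∃ v, G.Adj u v ∧ c v = j ∧ ((e.symm u : ℕ) < (e.symm v : ℕ))) →
      (∀ x, G.Adj u x → c x = j → (e.symm x : ℕ) < t) →
      (∑ x ∈ (G.neighborFinset u).filter (fun x => c x = j), (g x : ZMod (n j))) ≠ 0 := by
  induction t with
  | zero =>
    refine ⟨fun _ => 0, fun u j H h2 => ?_⟩
    obtain ⟨v, hadj, hcv, _⟩ := H
    exact absurd (h2 v hadj hcv) (by omega)
  | succ t ih =>
    obtain ⟨g, hg⟩ := ih
    by_cases ht : t < Fintype.card V
    · -- add vertex w = e ⟨t, ht⟩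
      set i : Fin (Fintype.card V) := ⟨t, ht⟩ with hi
      set w : V := e i with hwdef
      have hk0 : 0 < k := lt_of_le_of_lt (Nat.zero_le _) (he i)
      haveI : NeZero (n (c w)) := ⟨(lt_of_lt_of_le hk0 (hk _)).ne'⟩
      set BN : Finset V := (Finset.univ.filter fun jj => jj < i ∧ G.Adj (e i) (e jj)).image e
        with hBN
      set Bad : Finset (ZMod (n (c w))) :=
        BN.image (fun u => - ∑ x ∈ ((G.neighborFinset u).filter (fun x => c x = c w)).erase w,
          (g x : ZMod (n (c w)))) with hBad
      have hcard : Bad.card < Fintype.card (ZMod (n (c w))) := by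
        rw [ZMod.card]
        calc Bad.card ≤ BN.card := Finset.card_image_le
          _ ≤ _ := Finset.card_image_le
          _ < k := he i
          _ ≤ n (c w) := hk _
      obtain ⟨z, hz⟩ : ∃ z, z ∉ Bad := by
        by_contra h
        push_neg at h
        have hsub : (Finset.univ : Finset (ZMod (n (c w)))) ⊆ Bad := fun z _ => h z
        have := Finset.card_le_card hsub
        rw [Finset.card_univ] at this
        omega
      refine ⟨fun x => if x = w then z.val else g x, fun u j H h2 => ?_⟩
      by_cases hw : G.Adj u w ∧ c w = j
      · obtain ⟨huw, rfl⟩ := hw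
        have hmem : w ∈ (G.neighborFinset u).filter (fun x => c x = c w) := by
          simp [SimpleGraph.mem_neighborFinset, huw]
        rw [← Finset.add_sum_erase _ _ hmem]
        have hrest : ∀ x ∈ ((G.neighborFinset u).filter (fun x => c x = c w)).erase w,
            (((if x = w then z.val else g x : ℕ)) : ZMod (n (c w))) = (g x : ZMod (n (c w))) := by
          intro x hx
          rw [if_neg (Finset.ne_of_mem_erase hx)]
        rw [Finset.sum_congr rfl hrest,
          show ((fun x => if x = w then z.val else g x) w) = z.val from if_pos rfl,
          ZMod.natCast_val, ZMod.cast_id]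
        -- z + T ≠ 0
        intro hzero
        apply hz
        rw [hBad]
        have hultw : (e.symm u : ℕ) < t := by
          obtain ⟨v, hadj, hcv, hlt⟩ := H
          have := h2 v hadj hcv
          omega
        have huBN : u ∈ BN := by
          rw [hBN]
          refine Finset.mem_image.2 ⟨e.symm u, ?_, by simp⟩
          simp only [Finset.mem_filter, Finset.mem_univ, true_and, Equiv.apply_symm_apply]
          exact ⟨by rw [Fin.lt_def]; exact hultw, huw.symm⟩
        refine Finset.mem_image.2 ⟨u, huBN, ?_⟩
        exact (eq_neg_of_add_eq_zero_left hzero).symm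
      · have hrest : ∀ x ∈ (G.neighborFinset u).filter (fun x => c x = j),
            (((if x = w then z.val else g x : ℕ)) : ZMod (n j)) = (g x : ZMod (n j)) := by
          intro x hx
          rw [if_neg]
          rintro rfl
          simp only [Finset.mem_filter, SimpleGraph.mem_neighborFinset] at hx
          exact hw ⟨hx.1, hx.2⟩
        rw [Finset.sum_congr rfl hrest]
        refine hg u j H fun x hadj hcx => ?_
        have h2x := h2 x hadj hcx
        rcases Nat.lt_succ_iff_lt_or_eq.1 h2x with h | h
        · exact h
        · exfalso
          apply hw
          have : x = w := by
            rw [hwdef, hi]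
            rw [← Equiv.apply_symm_apply e x]
            congr 1
            exact Fin.ext h
          rw [← this]
          exact ⟨hadj, hcx⟩
    · refine ⟨g, fun u j H h2 => hg u j H fun x hadj hcx => ?_⟩
      exact lt_of_lt_of_le (Fin.is_lt _) (le_of_not_gt ht)

/-- (S. Norin) If `G` has chromatic number `r` and coloring number at most `k`
(witnessed by a linear ordering of the vertices in which every vertex has at most
`k - 1` backward neighbors), and `n₁, …, n_r` are pairwise coprime positive integers
with `nᵢ ≥ k`, then `η(G) ≤ n₁ ⋯ n_r`. -/
theorem additive_coloring_of_coloring_number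
    {V : Type*} [Fintype V] (G : SimpleGraph V) (r k : ℕ)
    (hchi : G.chromaticNumber = r)
    (hcol : ∃ e : Fin (Fintype.card V) ≃ V, ∀ i : Fin (Fintype.card V),
      letI := Classical.decRel G.Adj
      (Finset.univ.filter fun j => j < i ∧ G.Adj (e i) (e j)).card < k)
    (n : Fin r → ℕ) (hpos : ∀ i, 0 < n i)
    (hcop : ∀ i j, i ≠ j → Nat.Coprime (n i) (n j))
    (hk : ∀ i, k ≤ n i) :
    eta G ≤ ∏ i, n i := by
  letI : DecidableRel G.Adj := Classical.decRel G.Adj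
  letI : DecidableEq V := Classical.decEq V
  obtain ⟨e, he⟩ := hcol
  have hcolorable : G.Colorable r := by
    rw [← SimpleGraph.chromaticNumber_le_iff_colorable, hchi]
  obtain ⟨C⟩ := hcolorable
  set N := ∏ i, n i with hNdef
  have hN : 0 < N := Finset.prod_pos fun i _ => hpos i
  obtain ⟨g, hg⟩ := greedy_aux G (fun x => C x) n hk e he (Fintype.card V)
  have hcop' : ∀ x : V, Nat.Coprime (n (C x)) (∏ j ∈ Finset.univ.erase (C x), n j) :=
    fun x => Nat.Coprime.prod_right fun j hj =>
      hcop _ _ (Ne.symm (Finset.ne_of_mem_erase hj))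
  set y : V → ℕ := fun x => (Nat.chineseRemainder (hcop' x) (g x) 0).1 with hy
  set f : V → ℕ := fun x => if y x % N = 0 then N else y x % N with hf
  have hfmod : ∀ x, f x ≡ y x [MOD N] := by
    intro x
    rw [hf]
    simp only
    split_ifs with h
    · unfold Nat.ModEq
      rw [Nat.mod_self, h]
    · exact (Nat.mod_modEq _ _)
  have hcast : ∀ (x : V) (j : Fin r),
      ((f x : ZMod (n j))) = if C x = j then (g x : ZMod (n j)) else 0 := by
    intro x j
    have hdvdN : n j ∣ N := Finset.dvd_prod_of_mem _ (Finset.mem_univ j)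
    have h1 : f x ≡ y x [MOD n j] := (hfmod x).of_dvd hdvdN
    by_cases hcx : C x = j
    · rw [if_pos hcx, ZMod.natCast_eq_natCast_iff]
      have h2 : y x ≡ g x [MOD n (C x)] := (Nat.chineseRemainder (hcop' x) (g x) 0).2.1
      exact h1.trans (hcx ▸ h2)
    · rw [if_neg hcx]
      have hdvdM : n j ∣ ∏ jj ∈ Finset.univ.erase (C x), n jj :=
        Finset.dvd_prod_of_mem _ (Finset.mem_erase.2 ⟨fun hh => hcx hh.symm, Finset.mem_univ _⟩)
      have h2 : y x ≡ 0 [MOD n j] :=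
        ((Nat.chineseRemainder (hcop' x) (g x) 0).2.2).of_dvd hdvdM
      calc ((f x : ℕ) : ZMod (n j)) = ((0 : ℕ) : ZMod (n j)) :=
            (ZMod.natCast_eq_natCast_iff _ _ _).2 (h1.trans h2)
        _ = 0 := Nat.cast_zero
  have hmemb : ∀ v, f v ∈ Finset.Icc 1 N := by
    intro v
    rw [Finset.mem_Icc, hf]
    simp only
    split_ifs with h
    · exact ⟨hN, le_refl _⟩
    · exact ⟨Nat.pos_of_ne_zero h, (Nat.mod_lt _ hN).le⟩
  have key : ∀ u v, G.Adj u v → (e.symm u : ℕ) < (e.symm v : ℕ) →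
      nsum G f u ≠ nsum G f v := by
    intro u v hadj hlt hEq
    have hsum : ∀ w : V, ((nsum G f w : ℕ) : ZMod (n (C v))) =
        ∑ x ∈ (G.neighborFinset w).filter (fun x => C x = C v), (g x : ZMod (n (C v))) := by
      intro w
      show ((∑ x ∈ G.neighborFinset w, f x : ℕ) : ZMod (n (C v))) = _
      push_cast
      rw [Finset.sum_filter]
      exact Finset.sum_congr rfl fun x _ => hcast x (C v)
    have hne : (∑ x ∈ (G.neighborFinset u).filter (fun x => C x = C v),
        (g x : ZMod (n (C v)))) ≠ 0 :=
      hg u (C v) ⟨v, hadj, rfl, hlt⟩ (fun x _ _ => Fin.is_lt _)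
    apply hne
    rw [← hsum u, hEq, hsum v]
    rw [Finset.filter_eq_empty_iff.2, Finset.sum_empty]
    intro x hx
    rw [SimpleGraph.mem_neighborFinset] at hx
    exact fun hcc => C.valid hx hcc.symm
  refine Nat.sInf_le ⟨f, hmemb, fun u v hadj => ?_⟩
  rcases lt_trichotomy ((e.symm u : ℕ)) ((e.symm v : ℕ)) with h | h | h
  · exact key u v hadj h
  · exact absurd (e.symm.injective (Fin.ext h)) hadj.ne
  · exact (key v u hadj.symm h).symm
end

section
/- Let H be a finite hypergraph (a finite vertex set together with a family of nonempty finite subsets of it, called hyperedges) whose coloring number is at most k, i.e., there exists a linear ordering of the vertices of H such that for every vertex v, the number of distinct hyperedges B with v ∈ B and B ∖ {v} contained in the set of vertices preceding v is at most k − 1. Then there is a function f : V(H) → ℤ_k such that every hyperedge B satisfies Σ_{v ∈ B} f(v) ≠ 0 (mod k). -/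
/-- If a finite hypergraph `E` on vertex set `V` (hyperedges are nonempty finite subsets)
has coloring number at most `k`, i.e. there is a linear ordering of the vertices in which
every vertex has backward degree at most `k - 1` (the backward degree of `v` being the
number of distinct hyperedges `B` with `v ∈ B` and `B \ {v}` contained in the set of
preceding vertices), then there is `f : V → ℤ_k` such that every hyperedge has nonzero
sum modulo `k`. -/
theorem hypergraph_coloring_number
    {V : Type*} [Fintype V] [DecidableEq V]
    (E : Finset (Finset V)) (hE : ∀ B ∈ E, B.Nonempty) (k : ℕ)
    (hcol : ∃ e : Fin (Fintype.card V) ≃ V, ∀ i : Fin (Fintype.card V),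
      (E.filter fun B => e i ∈ B ∧ ∀ v ∈ B, v ≠ e i → ∃ j < i, e j = v).card < k) :
    ∃ f : V → ZMod k, ∀ B ∈ E, ∑ v ∈ B, f v ≠ 0 := by
  obtain ⟨e, he⟩ := hcol
  rcases E.eq_empty_or_nonempty with rfl | hEne
  · exact ⟨0, by simp⟩
  have hcard : 0 < Fintype.card V := by
    obtain ⟨B, hB⟩ := hEne
    obtain ⟨v, _⟩ := hE B hB
    exact Fintype.card_pos_iff.mpr ⟨v⟩
  have hk : 0 < k := lt_of_le_of_lt (Nat.zero_le _) (he ⟨0, hcard⟩)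
  haveI : NeZero k := ⟨hk.ne'⟩
  have key : ∀ m : ℕ, m ≤ Fintype.card V → ∃ f : V → ZMod k,
      ∀ B ∈ E, (∀ v ∈ B, ∃ j : Fin (Fintype.card V), (j : ℕ) < m ∧ e j = v) →
        ∑ v ∈ B, f v ≠ 0 := by
    intro m
    induction m with
    | zero =>
      intro _
      refine ⟨0, fun B hB hsub => ?_⟩
      obtain ⟨v, hv⟩ := hE B hB
      obtain ⟨j, hj, _⟩ := hsub v hv
      omega
    | succ m ih =>
      intro hm
      obtain ⟨f, hf⟩ := ih (by omega)
      set i : Fin (Fintype.card V) := ⟨m, by omega⟩ with hi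
      set S := E.filter fun B => e i ∈ B ∧ ∀ v ∈ B, v ≠ e i → ∃ j < i, e j = v with hS
      set T := S.image fun B => -∑ w ∈ B.erase (e i), f w with hT
      have hTcard : T.card < k := lt_of_le_of_lt (Finset.card_image_le) (he i)
      have hTc : (Tᶜ).Nonempty := by
        rw [← Finset.card_pos, Finset.card_compl]
        have := ZMod.card k
        omega
      obtain ⟨c, hc⟩ := hTc
      rw [Finset.mem_compl] at hc
      refine ⟨Function.update f (e i) c, fun B hB hsub => ?_⟩
      by_cases hiB : e i ∈ B
      · have hBS : B ∈ S := by
          rw [hS, Finset.mem_filter]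
          refine ⟨hB, hiB, fun v hv hvi => ?_⟩
          obtain ⟨j, hj, hje⟩ := hsub v hv
          have hji : j ≠ i := by
            intro h; exact hvi (by rw [← hje, h])
          refine ⟨j, ?_, hje⟩
          have : (j : ℕ) ≠ m := fun h => hji (Fin.ext h)
          exact Fin.lt_def.mpr (by simp only [hi]; omega)
        rw [← Finset.add_sum_erase _ _ hiB]
        have h1 : Function.update f (e i) c (e i) = c := Function.update_self _ _ _
        have h2 : ∑ w ∈ B.erase (e i), Function.update f (e i) c w
            = ∑ w ∈ B.erase (e i), f w := by
          refine Finset.sum_congr rfl fun w hw => ?_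
          exact Function.update_of_ne (Finset.ne_of_mem_erase hw) _ _
        rw [h1, h2]
        intro habs
        apply hc
        rw [hT, Finset.mem_image]
        exact ⟨B, hBS, by linear_combination -habs⟩
      · have h2 : ∑ v ∈ B, Function.update f (e i) c v = ∑ v ∈ B, f v := by
          refine Finset.sum_congr rfl fun w hw => ?_
          exact Function.update_of_ne (by rintro rfl; exact hiB hw) _ _
        rw [h2]
        refine hf B hB fun v hv => ?_
        obtain ⟨j, hj, hje⟩ := hsub v hv
        have : (j : ℕ) ≠ m := by
          intro h
          have hji : j = i := Fin.ext (by simp [hi, h])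
          rw [hji] at hje
          exact hiB (hje ▸ hv)
        exact ⟨j, by omega, hje⟩
  obtain ⟨f, hf⟩ := key (Fintype.card V) le_rfl
  refine ⟨f, fun B hB => hf B hB fun v _ => ⟨e.symm v, (e.symm v).isLt, e.apply_symm_apply v⟩⟩
end

section
/- (Combinatorial Nullstellensatz) Let F be an arbitrary field and let P(x₁, …, xₙ) be a polynomial in F[x₁, …, xₙ]. Suppose that the coefficient of the monomial x₁^{k₁} ⋯ xₙ^{kₙ} in P is nonzero and that k₁ + ⋯ + kₙ equals the total degree of P. Then for every choice of finite subsets A₁, …, Aₙ of F with |Aᵢ| ≥ kᵢ + 1 for each i, there exist elements aᵢ ∈ Aᵢ such that P(a₁, …, aₙ) ≠ 0. -/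
open Polynomial Finset

lemma cn_basis_coeff_top {F : Type*} [Field F] [DecidableEq F] (A : Finset F) (k : ℕ)
    (hcard : A.card = k + 1) {x : F} (hx : x ∈ A) :
    (Lagrange.basis A id x).coeff k = (∏ b ∈ A.erase x, (x - b))⁻¹ := by
  have hcase : (A.erase x).card = k := by rw [Finset.card_erase_of_mem hx, hcard]; rfl
  have hrw : Lagrange.basis A id x
      = Polynomial.C (∏ b ∈ A.erase x, (x - b)⁻¹) * ∏ b ∈ A.erase x, (X - C b) := by
    rw [Lagrange.basis]
    simp only [Lagrange.basisDivisor, id]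
    rw [Finset.prod_mul_distrib, map_prod]
  have hmonic : (∏ b ∈ A.erase x, (X - C b) : F[X]).Monic :=
    monic_prod_of_monic _ _ fun b _ => monic_X_sub_C b
  have hnd : (∏ b ∈ A.erase x, (X - C b) : F[X]).natDegree = k := by
    rw [natDegree_prod _ _ fun b _ => X_sub_C_ne_zero b]
    simp [hcase]
  rw [hrw, coeff_C_mul, ← hnd, hmonic.coeff_natDegree, mul_one, ← Finset.prod_inv_distrib]

lemma cn_one_var_sum {F : Type*} [Field F] [DecidableEq F] (A : Finset F) (k d : ℕ)
    (hcard : A.card = k + 1) (hd : d ≤ k) :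
    ∑ x ∈ A, x ^ d * (∏ b ∈ A.erase x, (x - b))⁻¹ = if d = k then 1 else 0 := by
  have hinj : Set.InjOn (id : F → F) A := Function.injective_id.injOn
  have hdeg : ((X : F[X]) ^ d).degree < A.card := by
    rw [hcard]
    calc ((X : F[X]) ^ d).degree ≤ d := degree_X_pow_le d
    _ < (k + 1 : ℕ) := by exact_mod_cast Nat.lt_succ_of_le hd
  have h := Lagrange.eq_interpolate (f := (X : F[X]) ^ d) hinj hdeg
  have h2 := congrArg (fun p => Polynomial.coeff p k) h
  simp only [Lagrange.interpolate_apply, Polynomial.finset_sum_coeff, coeff_C_mul,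
    eval_pow, eval_X, id] at h2
  rw [Polynomial.coeff_X_pow] at h2
  calc ∑ x ∈ A, x ^ d * (∏ b ∈ A.erase x, (x - b))⁻¹
      = ∑ x ∈ A, x ^ d * (Lagrange.basis A id x).coeff k :=
        Finset.sum_congr rfl fun x hx => by rw [cn_basis_coeff_top A k hcard hx]
    _ = if k = d then 1 else 0 := h2.symm
    _ = if d = k then 1 else 0 := by simp [eq_comm]

lemma cn_mono_case {F : Type*} [Field F] [DecidableEq F] {n : ℕ} (k : Fin n → ℕ)
    (A : Fin n → Finset F) (hcard : ∀ i, (A i).card = k i + 1)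
    (v : Fin n →₀ ℕ) (c : F) (hv : ∑ i, v i ≤ ∑ i, k i) :
    (MvPolynomial.monomial v c).coeff (Finsupp.equivFunOnFinite.symm k)
      = ∑ a ∈ Fintype.piFinset A, MvPolynomial.eval a (MvPolynomial.monomial v c) *
          ∏ i, (∏ b ∈ (A i).erase (a i), (a i - b))⁻¹ := by
  have hK : ∀ i, (Finsupp.equivFunOnFinite.symm k) i = k i := fun i => rfl
  have heval : ∀ a : Fin n → F, MvPolynomial.eval a (MvPolynomial.monomial v c)
      = c * ∏ i, (a i) ^ (v i) := by
    intro a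
    rw [MvPolynomial.eval_monomial]
    congr 1
    exact Finsupp.prod_fintype _ _ fun i => pow_zero _
  calc (MvPolynomial.monomial v c).coeff (Finsupp.equivFunOnFinite.symm k)
      = (if v = Finsupp.equivFunOnFinite.symm k then c else 0) :=
        MvPolynomial.coeff_monomial _ _ _
    _ = c * ∏ i, ∑ x ∈ A i, x ^ (v i) * (∏ b ∈ (A i).erase x, (x - b))⁻¹ := by
        by_cases hvk : v = Finsupp.equivFunOnFinite.symm k
        · simp only [hvk, if_pos rfl]
          rw [Finset.prod_congr rfl fun i _ => cn_one_var_sum (A i) (k i) _ (hcard i) (hK i).le]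
          simp [hK]
        · rw [if_neg hvk]
          obtain ⟨j, hj⟩ : ∃ j, v j < k j := by
            by_contra hc
            push_neg at hc
            have hsum : ∑ i, k i = ∑ i, (v i : ℕ) :=
              le_antisymm (Finset.sum_le_sum fun i _ => hc i) hv
            have := (Finset.sum_eq_sum_iff_of_le fun i (_ : i ∈ univ) => hc i).mp hsum
            exact hvk (Finsupp.ext fun i => ((this i (mem_univ i)).symm))
          rw [Finset.prod_eq_zero (mem_univ j), mul_zero]
          rw [cn_one_var_sum (A j) (k j) _ (hcard j) hj.le, if_neg hj.ne]
    _ = c * ∑ a ∈ Fintype.piFinset A, ∏ i, (a i) ^ (v i) *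
          (∏ b ∈ (A i).erase (a i), (a i - b))⁻¹ := by rw [Finset.prod_univ_sum]
    _ = _ := by
        rw [Finset.mul_sum]
        refine Finset.sum_congr rfl fun a _ => ?_
        rw [heval a, Finset.prod_mul_distrib, mul_assoc]

lemma cn_coeff_eq_sum {F : Type*} [Field F] [DecidableEq F] {n : ℕ}
    (P : MvPolynomial (Fin n) F) (k : Fin n → ℕ)
    (A : Fin n → Finset F) (hcard : ∀ i, (A i).card = k i + 1)
    (htd : P.totalDegree ≤ ∑ i, k i) :
    P.coeff (Finsupp.equivFunOnFinite.symm k)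
      = ∑ a ∈ Fintype.piFinset A, MvPolynomial.eval a P *
          ∏ i, (∏ b ∈ (A i).erase (a i), (a i - b))⁻¹ := by
  conv_lhs => rw [P.as_sum]
  rw [MvPolynomial.coeff_sum]
  rw [Finset.sum_congr rfl fun v hv => cn_mono_case k A hcard v (P.coeff v) ?_]
  · rw [Finset.sum_comm]
    refine Finset.sum_congr rfl fun a _ => ?_
    rw [← Finset.sum_mul]
    congr 1
    rw [← map_sum, ← P.as_sum]
  · refine le_trans ?_ htd
    have := MvPolynomial.le_totalDegree hv
    rwa [show (v.sum fun _ e => e) = ∑ i, v i from Finsupp.sum_fintype _ _ fun i => rfl] at this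

/-- (Combinatorial Nullstellensatz, Alon) Let `F` be a field and `P ∈ F[x₁, …, xₙ]`.
If the coefficient of the monomial `x₁^{k₁} ⋯ xₙ^{kₙ}` in `P` is nonzero and
`k₁ + ⋯ + kₙ` equals the total degree of `P`, then for all finite subsets
`A₁, …, Aₙ ⊆ F` with `|Aᵢ| ≥ kᵢ + 1` there exist `aᵢ ∈ Aᵢ` with `P(a₁, …, aₙ) ≠ 0`. -/
theorem combinatorial_nullstellensatz
    {F : Type*} [Field F] {n : ℕ} (P : MvPolynomial (Fin n) F) (k : Fin n → ℕ)
    (hcoeff : P.coeff (Finsupp.equivFunOnFinite.symm k) ≠ 0)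
    (hdeg : ∑ i, k i = P.totalDegree)
    (A : Fin n → Finset F) (hA : ∀ i, k i + 1 ≤ (A i).card) :
    ∃ a : Fin n → F, (∀ i, a i ∈ A i) ∧ MvPolynomial.eval a P ≠ 0 := by
  classical
  choose B hB hBcard using fun i => Finset.exists_subset_card_eq (hA i)
  have h := cn_coeff_eq_sum P k B hBcard (le_of_eq hdeg.symm)
  rw [h] at hcoeff
  obtain ⟨a, ha, hane⟩ := Finset.exists_ne_zero_of_sum_ne_zero hcoeff
  refine ⟨a, fun i => hB i (Fintype.mem_piFinset.mp ha i), fun h0 => hane ?_⟩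
  rw [h0, zero_mul]
end

section
/- Let G be a finite bipartite simple graph whose edges can be oriented so that each vertex has indegree at most k, i.e., there is an assignment of a head endpoint to every edge such that every vertex is the head of at most k edges. Suppose each vertex v is assigned a list L(v) of k + 1 distinct real numbers, and let q : V(G) → ℝ be an arbitrary function. Then there is a coloring f of the vertices with f(v) ∈ L(v) for every vertex v, such that q(u) + Σ_{x ∈ N(u)} f(x) ≠ q(v) + Σ_{x ∈ N(v)} f(x) for every pair of adjacent vertices u and v. -/
/-!
Let `ε = ±1` be the sign of the colour class and write `f = ε g`. Since adjacent vertices have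
disjoint neighbourhoods lying in the opposite class, at an edge `uv` the required inequality
becomes, after multiplication by `-ε u`, the non-vanishing of the linear form
`c_uv + ∑_{x ∈ N(u) ∪ N(v)} g x`. The product of these forms over the edges has degree `|E|`, and
the orientation picks out the top monomial `∏_e X_{ori e}`, whose exponent at `v` is the indegree
of `v`, so at most `k`. Its coefficient is positive, because the top-degree part
`∏_e ∑_{x} X x` has nonnegative coefficients, so Alon's Combinatorial Nullstellensatz gives values
`g v ∈ ε v • L v` at which no form vanishes.
-/

open Finset

namespace MvPolynomial

variable {σ ι R : Type*}

theorem coeff_prod_C_add_of_degree_eq [CommSemiring R] (E : Finset ι)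
    (c : ι → R) (H : ι → MvPolynomial σ R) (hH : ∀ e ∈ E, (H e).totalDegree ≤ 1)
    {t : σ →₀ ℕ} (ht : t.degree = #E) :
    coeff t (∏ e ∈ E, (C (c e) + H e)) = coeff t (∏ e ∈ E, H e) := by
  classical
  simp_rw [add_comm (C _), prod_add, coeff_sum]
  refine (sum_eq_single_of_mem E (mem_powerset_self E) fun s hsE hs => ?_).trans (by simp)
  have hlt : #s < #E := card_lt_card (ssubset_of_subset_of_ne (mem_powerset.mp hsE) hs)
  refine coeff_eq_zero_of_totalDegree_lt ?_
  calc ((∏ e ∈ s, H e) * ∏ e ∈ E \ s, C (c e)).totalDegree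
      ≤ ∑ e ∈ s, (H e).totalDegree := by
        rw [← map_prod, mul_comm, ← smul_eq_C_mul]
        exact (totalDegree_smul_le _ _).trans (totalDegree_finsetProd _ _)
    _ ≤ ∑ e ∈ s, 1 := sum_le_sum fun e he => hH e (mem_powerset.mp hsE he)
    _ < t.degree := by simpa [ht]

theorem coeff_sum_single_prod_sum_X_ne_zero [CommSemiring R] [CharZero R]
    (E : Finset ι) (S : ι → Finset σ) (ch : ι → σ) (hch : ∀ e ∈ E, ch e ∈ S e) :
    coeff (∑ e ∈ E, Finsupp.single (ch e) 1) (∏ e ∈ E, ∑ x ∈ S e, X x : MvPolynomial σ R) ≠ 0 := by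
  classical
  -- over `ℕ` no cancellation is possible, so the term of the expansion chosen by `ch` survives
  have hmap : (∏ e ∈ E, ∑ x ∈ S e, X x : MvPolynomial σ R) =
      map (Nat.castRingHom R) (∏ e ∈ E, ∑ x ∈ S e, X x) := by
    simp [map_prod, map_sum]
  rw [hmap, coeff_map, Nat.coe_castRingHom, Nat.cast_ne_zero, ← Nat.pos_iff_ne_zero]
  have hsplit : ∀ e ∈ E, ∑ x ∈ S e, (X x : MvPolynomial σ ℕ) =
      X (ch e) + ∑ x ∈ (S e).erase (ch e), X x := fun e he => (add_sum_erase _ _ (hch e he)).symm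
  rw [prod_congr rfl hsplit, prod_add, coeff_sum]
  refine lt_of_lt_of_le ?_ (single_le_sum (fun _ _ => Nat.zero_le _) (mem_powerset_self E))
  simp [X, ← monomial_sum_one]

end MvPolynomial

open MvPolynomial in
theorem exists_forall_mem_forall_add_sum_ne_zero {ι V R : Type*} [Finite V] [DecidableEq V]
    [CommRing R] [IsDomain R] [CharZero R] (E : Finset ι) (S : ι → Finset V) (c : ι → R)
    (ch : ι → V) (hch : ∀ e ∈ E, ch e ∈ S e) (L : V → Finset R)
    (hL : ∀ v, #{e ∈ E | ch e = v} < #(L v)) :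
    ∃ g : V → R, (∀ v, g v ∈ L v) ∧ ∀ e ∈ E, c e + ∑ x ∈ S e, g x ≠ 0 := by
  set P : MvPolynomial V R := ∏ e ∈ E, (C (c e) + ∑ x ∈ S e, X x)
  set D : V →₀ ℕ := ∑ e ∈ E, Finsupp.single (ch e) 1
  have hD : D.degree = #E := by simp [D, map_sum]
  have hlinear : ∀ e, (∑ x ∈ S e, X x : MvPolynomial V R).totalDegree ≤ 1 :=
    fun e => totalDegree_finsetSum_le fun x _ => (totalDegree_X x).le
  have hDP : coeff D P ≠ 0 := by
    rw [coeff_prod_C_add_of_degree_eq _ _ _ (fun e _ => hlinear e) hD]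
    exact coeff_sum_single_prod_sum_X_ne_zero E S ch hch
  have hPdeg : P.totalDegree = D.degree := by
    refine le_antisymm ?_ (le_totalDegree (mem_support_iff.mpr hDP))
    calc P.totalDegree ≤ ∑ e ∈ E, 1 := (totalDegree_finsetProd _ _).trans <| sum_le_sum fun e _ =>
          (totalDegree_add _ _).trans (max_le (by simp) (hlinear e))
      _ = D.degree := by simp [hD]
  have hDL : ∀ v, D v < #(L v) := fun v => by
    simpa only [D, Finsupp.finsetSum_apply, Finsupp.single_apply, ← card_filter] using hL v
  obtain ⟨g, hgL, hg⟩ := combinatorial_nullstellensatz_exists_eval_nonzero P D hDP hPdeg L hDL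
  refine ⟨g, hgL, fun e he => ?_⟩
  simp only [P, map_prod, prod_ne_zero_iff] at hg
  simpa using hg e he

namespace SimpleGraph

variable {V : Type*} {G : SimpleGraph V}

lemma nsum_eq_sum_neighborFinset [Fintype V] [DecidableRel G.Adj] {M : Type*}
    [AddCommMonoid M] (f : V → M) (u : V) : nsum G f u = ∑ x ∈ G.neighborFinset u, f x := by
  rw [nsum]
  congr!

namespace Coloring

def sign (C : G.Coloring (Fin 2)) (v : V) : ℝ := if C v = 0 then 1 else -1

variable (C : G.Coloring (Fin 2)) {u v : V}

lemma sign_mul_self (v : V) : C.sign v * C.sign v = 1 := by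
  unfold sign; split_ifs <;> norm_num

lemma sign_ne_zero (v : V) : C.sign v ≠ 0 := by
  unfold sign; split_ifs <;> norm_num

lemma sign_of_adj (h : G.Adj u v) : C.sign v = -C.sign u := by
  have hne : C u ≠ C v := C.valid h
  by_cases hu : C u = 0
  · simp [sign, hu, show C v ≠ 0 by omega]
  · simp [sign, hu, show C v = 0 by omega]

variable [Fintype V] [DecidableRel G.Adj]

lemma disjoint_neighborFinset_of_adj (C : G.Coloring (Fin 2)) (h : G.Adj u v) :
    Disjoint (G.neighborFinset u) (G.neighborFinset v) := by
  refine Finset.disjoint_left.mpr fun x hxu hxv => (C.sign_ne_zero u ?_).elim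
  have hu := C.sign_of_adj ((G.mem_neighborFinset u x).mp hxu)
  have hv := C.sign_of_adj ((G.mem_neighborFinset v x).mp hxv)
  linarith [C.sign_of_adj h]

lemma sum_neighborFinset_sign_mul (f : V → ℝ) (u : V) :
    ∑ x ∈ G.neighborFinset u, C.sign x * f x = -C.sign u * ∑ x ∈ G.neighborFinset u, f x := by
  rw [mul_sum]
  exact sum_congr rfl fun x hx => by rw [C.sign_of_adj ((G.mem_neighborFinset u x).mp hx)]

lemma add_nsum_sub_add_nsum [DecidableEq V] (q f : V → ℝ) (h : G.Adj u v) :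
    q u + nsum G f u - (q v + nsum G f v) = -C.sign u *
      (-(C.sign u * q u + C.sign v * q v) +
        ∑ x ∈ G.neighborFinset u ∪ G.neighborFinset v, C.sign x * f x) := by
  rw [sum_union (C.disjoint_neighborFinset_of_adj h), C.sum_neighborFinset_sign_mul,
    C.sum_neighborFinset_sign_mul, nsum_eq_sum_neighborFinset, nsum_eq_sum_neighborFinset,
    C.sign_of_adj h]
  linear_combination (q u - q v + ∑ x ∈ G.neighborFinset u, f x - ∑ x ∈ G.neighborFinset v, f x) *
    (C.sign_mul_self u).symm

end Coloring
end SimpleGraph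

/-- Let `G` be a finite bipartite simple graph whose edges can be oriented (a head
endpoint is chosen for every edge) so that every vertex has indegree at most `k`.
If every vertex `v` carries a list `L v` of `k + 1` distinct reals and `q` is any
real-valued function on the vertices, then there is a choice `f v ∈ L v` such that
`q u + Σ_{x ∈ N(u)} f x ≠ q v + Σ_{x ∈ N(v)} f x` for all adjacent `u`, `v`. -/
theorem additive_choice_from_lists_bipartite
    {V : Type*} [Fintype V] [DecidableEq V] (G : SimpleGraph V) [DecidableRel G.Adj]
    (hbip : G.Colorable 2) (k : ℕ)
    (hor : ∃ ori : Sym2 V → V, (∀ e ∈ G.edgeSet, ori e ∈ e) ∧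
      ∀ v : V, (G.edgeFinset.filter fun e => ori e = v).card ≤ k)
    (L : V → Finset ℝ) (hL : ∀ v, (L v).card = k + 1) (q : V → ℝ) :
    ∃ f : V → ℝ, (∀ v, f v ∈ L v) ∧
      ∀ ⦃u v : V⦄, G.Adj u v → q u + nsum G f u ≠ q v + nsum G f v := by
  obtain ⟨ori, hori, hindeg⟩ := hor
  obtain ⟨C⟩ := hbip
  let S : Sym2 V → Finset V :=
    Sym2.lift ⟨fun u v => G.neighborFinset u ∪ G.neighborFinset v, fun _ _ => union_comm _ _⟩
  let c : Sym2 V → ℝ :=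
    Sym2.lift ⟨fun u v => -(C.sign u * q u + C.sign v * q v), fun _ _ => by ring⟩
  have hS : ∀ e ∈ G.edgeFinset, ori e ∈ S e := by
    intro e he
    induction e with | h u v => ?_
    have huv : G.Adj u v := G.mem_edgeFinset.mp he
    rcases Sym2.mem_iff.mp (hori _ (G.mem_edgeFinset.mp he)) with h | h <;>
      simp [S, h, huv, huv.symm]
  obtain ⟨g, hgL, hg⟩ := exists_forall_mem_forall_add_sum_ne_zero G.edgeFinset S c ori hS
    (fun v => (L v).image (C.sign v * ·)) fun v => by
      rw [card_image_of_injective _ (mul_right_injective₀ (C.sign_ne_zero v)), hL]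
      exact Nat.lt_succ_of_le (hindeg v)
  refine ⟨fun v => C.sign v * g v, fun v => ?_, fun u v huv => ?_⟩
  · obtain ⟨r, hr, hrg⟩ := mem_image.mp (hgL v)
    simpa [← hrg, ← mul_assoc, C.sign_mul_self] using hr
  · rw [← sub_ne_zero, C.add_nsum_sub_add_nsum q _ huv]
    refine mul_ne_zero (neg_ne_zero.mpr (C.sign_ne_zero u)) ?_
    simpa [S, c, ← mul_assoc, C.sign_mul_self] using hg s(u, v) (G.mem_edgeFinset.mpr huv)
end

section
/- Let G be a finite bipartite simple graph with bipartition classes U = {u₁, …, u_m} and V = {v₁, …, vₙ}, equipped with an orientation of its edges in which every vertex has indegree at most k, and let q : V(G) → ℝ be any function. Assign variables x₁, …, x_m to the vertices of U and y₁, …, yₙ to the vertices of V, and for a vertex w let S(w) denote the formal sum of the variables assigned to the neighbors of w. Then the polynomial P = ∏_{uᵢvⱼ ∈ E(G)} ( q(uᵢ) + S(uᵢ) − q(vⱼ) − S(vⱼ) ) over ℝ has total degree equal to the number of edges of G, and P contains a monomial with nonzero coefficient in which every variable occurs with exponent at most k. -/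
/-!
Replacing every `xᵢ` by `-xᵢ` turns each linear part `S(uᵢ) - S(vⱼ)` into a sum of variables
with nonnegative coefficients, among which is the variable of the head of the edge `uᵢvⱼ`.
Every factor has degree at most one, so in degree `|E|` the constants `q` do not contribute, and
the degree-`|E|` coefficients of the substituted product are nonnegative; the one of the
indegree monomial `∏_e (head of e)` is positive. Undoing the substitution changes signs only.
-/

open MvPolynomial

/-- The graph polynomial of a bipartite graph with classes `Fin m` (variables `xᵢ`,
encoded as `X (Sum.inl i)`) and `Fin n` (variables `yⱼ`, encoded as `X (Sum.inr j)`)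
and edge set `E`:  `P = ∏_{(i,j) ∈ E} ( q(uᵢ) + S(uᵢ) − q(vⱼ) − S(vⱼ) )`,
where `S(w)` is the formal sum of the variables assigned to the neighbors of `w`. -/
noncomputable def bipPoly (m n : ℕ) (E : Finset (Fin m × Fin n))
    (qu : Fin m → ℝ) (qv : Fin n → ℝ) : MvPolynomial (Fin m ⊕ Fin n) ℝ :=
  ∏ e ∈ E,
    (C (qu e.1) + (∑ j ∈ Finset.univ.filter fun j => (e.1, j) ∈ E, X (Sum.inr j))
      - C (qv e.2) - ∑ i ∈ Finset.univ.filter fun i => (i, e.2) ∈ E, X (Sum.inl i))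

namespace MvPolynomial

open Finset.HasAntidiagonal

variable {σ R : Type*} [CommSemiring R]

/-- The coefficient of `X^d` in `p(χ₁ X₁, χ₂ X₂, …)`. -/
noncomputable def twistedCoeff (χ : σ → R) (d : σ →₀ ℕ) : MvPolynomial σ R →ₗ[R] R :=
  (d.prod fun w k => χ w ^ k) • lcoeff R d

theorem twistedCoeff_apply (χ : σ → R) (d : σ →₀ ℕ) (p : MvPolynomial σ R) :
    twistedCoeff χ d p = (d.prod fun w k => χ w ^ k) * coeff d p :=
  rfl

theorem twistedCoeff_C_of_ne_zero (χ : σ → R) {d : σ →₀ ℕ} (hd : d ≠ 0) (a : R) :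
    twistedCoeff χ d (C a) = 0 := by
  rw [twistedCoeff_apply, coeff_C_of_ne_zero hd, mul_zero]

theorem twistedCoeff_X [DecidableEq σ] (χ : σ → R) (d : σ →₀ ℕ) (w : σ) :
    twistedCoeff χ d (X w) = if Finsupp.single w 1 = d then χ w else 0 := by
  rw [twistedCoeff_apply, coeff_X]
  split_ifs with h
  · rw [← h, Finsupp.prod_single_index (h := fun w k => χ w ^ k) (pow_zero _), pow_one, mul_one]
  · rw [mul_zero]

theorem twistedCoeff_eq_zero_of_totalDegree_lt (χ : σ → R) {d : σ →₀ ℕ} {p : MvPolynomial σ R}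
    (h : p.totalDegree < d.degree) : twistedCoeff χ d p = 0 := by
  rw [twistedCoeff_apply, coeff_eq_zero_of_totalDegree_lt h, mul_zero]

theorem coeff_ne_zero_of_twistedCoeff_ne_zero {χ : σ → R} {d : σ →₀ ℕ} {p : MvPolynomial σ R}
    (h : twistedCoeff χ d p ≠ 0) : coeff d p ≠ 0 := by
  rw [twistedCoeff_apply] at h
  exact right_ne_zero_of_mul h

theorem twistedCoeff_mul [DecidableEq σ] (χ : σ → R) (d : σ →₀ ℕ) (p q : MvPolynomial σ R) :
    twistedCoeff χ d (p * q) =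
      ∑ x ∈ antidiagonal d, twistedCoeff χ x.1 p * twistedCoeff χ x.2 q := by
  rw [twistedCoeff_apply, coeff_mul, Finset.mul_sum]
  refine Finset.sum_congr rfl fun x hx => ?_
  rw [← mem_antidiagonal.mp hx,
    Finsupp.prod_add_index' (fun _ => pow_zero _) (fun _ _ _ => pow_add _ _ _)]
  simp only [twistedCoeff_apply]
  ring

variable [PartialOrder R]

def TopTwistedNonneg (χ : σ → R) (n : ℕ) (p : MvPolynomial σ R) : Prop :=
  p.totalDegree ≤ n ∧ ∀ d : σ →₀ ℕ, d.degree = n → 0 ≤ twistedCoeff χ d p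

namespace TopTwistedNonneg

variable {χ : σ → R} {n m : ℕ} {p q : MvPolynomial σ R}

section OrderedRing

variable [IsOrderedRing R]

theorem mul_twistedCoeff_nonneg (hp : TopTwistedNonneg χ n p) (hq : TopTwistedNonneg χ m q)
    {a b : σ →₀ ℕ} (hab : (a + b).degree = n + m) :
    0 ≤ twistedCoeff χ a p * twistedCoeff χ b q := by
  rw [map_add] at hab
  rcases lt_trichotomy a.degree n with ha | ha | ha
  · rw [twistedCoeff_eq_zero_of_totalDegree_lt χ (p := q) (by have := hq.1; omega), mul_zero]
  · exact mul_nonneg (hp.2 a ha) (hq.2 b (by omega))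
  · rw [twistedCoeff_eq_zero_of_totalDegree_lt χ (p := p) (by have := hp.1; omega), zero_mul]

theorem mul (hp : TopTwistedNonneg χ n p) (hq : TopTwistedNonneg χ m q) :
    TopTwistedNonneg χ (n + m) (p * q) := by
  classical
  refine ⟨(totalDegree_mul p q).trans (add_le_add hp.1 hq.1), fun d hd => ?_⟩
  rw [twistedCoeff_mul]
  exact Finset.sum_nonneg fun x hx =>
    hp.mul_twistedCoeff_nonneg hq (by rwa [mem_antidiagonal.mp hx])

theorem mul_twistedCoeff_le (hp : TopTwistedNonneg χ n p) (hq : TopTwistedNonneg χ m q)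
    {a b : σ →₀ ℕ} (ha : a.degree = n) (hb : b.degree = m) :
    twistedCoeff χ a p * twistedCoeff χ b q ≤ twistedCoeff χ (a + b) (p * q) := by
  classical
  rw [twistedCoeff_mul]
  have hd : (a + b).degree = n + m := by rw [map_add, ha, hb]
  exact Finset.single_le_sum (f := fun x => twistedCoeff χ x.1 p * twistedCoeff χ x.2 q)
    (fun x hx => hp.mul_twistedCoeff_nonneg hq (by rwa [mem_antidiagonal.mp hx]))
    (a := (a, b)) (mem_antidiagonal.mpr rfl)

theorem one : TopTwistedNonneg χ 0 (1 : MvPolynomial σ R) := by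
  refine ⟨totalDegree_one.le, fun d hd => ?_⟩
  rw [(Finsupp.degree_eq_zero_iff d).mp hd, twistedCoeff_apply]
  simp

theorem prod {ι : Type*} {s : Finset ι} {f : ι → MvPolynomial σ R} {n : ι → ℕ}
    (h : ∀ i ∈ s, TopTwistedNonneg χ (n i) (f i)) :
    TopTwistedNonneg χ (∑ i ∈ s, n i) (∏ i ∈ s, f i) := by
  classical
  induction s using Finset.induction_on with
  | empty => simpa using one
  | insert i s hi ih =>
    rw [Finset.prod_insert hi, Finset.sum_insert hi]
    exact (h i (Finset.mem_insert_self i s)).mul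
      (ih fun j hj => h j (Finset.mem_insert_of_mem hj))

end OrderedRing

theorem twistedCoeff_prod_pos [IsStrictOrderedRing R] {ι : Type*} {s : Finset ι}
    {f : ι → MvPolynomial σ R} {n : ι → ℕ} {a : ι → σ →₀ ℕ}
    (h : ∀ i ∈ s, TopTwistedNonneg χ (n i) (f i)) (ha : ∀ i ∈ s, (a i).degree = n i)
    (hpos : ∀ i ∈ s, 0 < twistedCoeff χ (a i) (f i)) :
    0 < twistedCoeff χ (∑ i ∈ s, a i) (∏ i ∈ s, f i) := by
  classical
  induction s using Finset.induction_on with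
  | empty => simp [twistedCoeff_apply]
  | insert i s hi ih =>
    have hs : ∀ j ∈ s, j ∈ insert i s := fun j hj => Finset.mem_insert_of_mem hj
    rw [Finset.prod_insert hi, Finset.sum_insert hi]
    refine (mul_pos (hpos i (Finset.mem_insert_self i s)) ?_).trans_le
      ((h i (Finset.mem_insert_self i s)).mul_twistedCoeff_le (prod fun j hj => h j (hs j hj))
        (ha i (Finset.mem_insert_self i s)) ?_)
    · exact ih (fun j hj => h j (hs j hj)) (fun j hj => ha j (hs j hj))
        (fun j hj => hpos j (hs j hj))
    · rw [map_sum]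
      exact Finset.sum_congr rfl fun j hj => ha j (hs j hj)

end TopTwistedNonneg

end MvPolynomial

namespace BipartitePolynomial

open Finset

variable {m n : ℕ}

noncomputable def edgeFactor (E : Finset (Fin m × Fin n)) (qu : Fin m → ℝ) (qv : Fin n → ℝ)
    (e : Fin m × Fin n) : MvPolynomial (Fin m ⊕ Fin n) ℝ :=
  C (qu e.1) + (∑ j ∈ Finset.univ.filter fun j => (e.1, j) ∈ E, X (Sum.inr j))
    - C (qv e.2) - ∑ i ∈ Finset.univ.filter fun i => (i, e.2) ∈ E, X (Sum.inl i)

theorem bipPoly_eq_prod_edgeFactor (E : Finset (Fin m × Fin n)) (qu : Fin m → ℝ)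
    (qv : Fin n → ℝ) : bipPoly m n E qu qv = ∏ e ∈ E, edgeFactor E qu qv e :=
  rfl

/-- The substitution `xᵢ ↦ -xᵢ`, under which every linear coefficient of `edgeFactor` is
nonnegative. -/
def xSign : Fin m ⊕ Fin n → ℝ :=
  Sum.elim (fun _ => -1) (fun _ => 1)

def head (ori : Fin m × Fin n → Bool) (e : Fin m × Fin n) : Fin m ⊕ Fin n :=
  if ori e then Sum.inl e.1 else Sum.inr e.2

variable (E : Finset (Fin m × Fin n)) (qu : Fin m → ℝ) (qv : Fin n → ℝ) (e : Fin m × Fin n)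

theorem totalDegree_edgeFactor_le : (edgeFactor E qu qv e).totalDegree ≤ 1 := by
  rw [← mem_restrictTotalDegree]
  refine sub_mem (sub_mem (add_mem ?_ (sum_mem fun j _ => ?_)) ?_) (sum_mem fun i _ => ?_) <;>
    simp [mem_restrictTotalDegree, totalDegree_X]

theorem twistedCoeff_edgeFactor {a : Fin m ⊕ Fin n →₀ ℕ} (ha : a ≠ 0) :
    twistedCoeff xSign a (edgeFactor E qu qv e) =
      (∑ j ∈ univ.filter fun j => (e.1, j) ∈ E,
          if Finsupp.single (Sum.inr j) 1 = a then 1 else 0) +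
        ∑ i ∈ univ.filter fun i => (i, e.2) ∈ E,
          if Finsupp.single (Sum.inl i) 1 = a then 1 else 0 := by
  rw [edgeFactor, map_sub, map_sub, map_add, twistedCoeff_C_of_ne_zero _ ha,
    twistedCoeff_C_of_ne_zero _ ha, map_sum, map_sum, zero_add, sub_zero, sub_eq_add_neg,
    ← sum_neg_distrib]
  simp only [twistedCoeff_X, xSign, Sum.elim_inl, Sum.elim_inr]
  congr 1
  refine sum_congr rfl fun i _ => ?_
  split_ifs <;> norm_num

theorem topTwistedNonneg_edgeFactor : TopTwistedNonneg xSign 1 (edgeFactor E qu qv e) := by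
  refine ⟨totalDegree_edgeFactor_le E qu qv e, fun a ha => ?_⟩
  rw [twistedCoeff_edgeFactor E qu qv e (by rintro rfl; simp at ha)]
  positivity

theorem twistedCoeff_edgeFactor_head_pos (ori : Fin m × Fin n → Bool) (he : e ∈ E) :
    0 < twistedCoeff xSign (Finsupp.single (head ori e) 1) (edgeFactor E qu qv e) := by
  rw [twistedCoeff_edgeFactor E qu qv e (by simp)]
  unfold head
  split <;> simp [he, Finsupp.single_left_inj]

noncomputable def indegree (ori : Fin m × Fin n → Bool) : Fin m ⊕ Fin n →₀ ℕ :=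
  ∑ e ∈ E, Finsupp.single (head ori e) 1

theorem degree_indegree (ori : Fin m × Fin n → Bool) : (indegree E ori).degree = #E := by
  simp [indegree, map_sum]

theorem indegree_le {k : ℕ} {ori : Fin m × Fin n → Bool}
    (hU : ∀ i : Fin m, (E.filter fun e => e.1 = i ∧ ori e = true).card ≤ k)
    (hV : ∀ j : Fin n, (E.filter fun e => e.2 = j ∧ ori e = false).card ≤ k)
    (w : Fin m ⊕ Fin n) : indegree E ori w ≤ k := by
  classical
  have hcard : indegree E ori w = #{e ∈ E | head ori e = w} := by
    rw [indegree, Finsupp.finsetSum_apply, card_filter]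
    exact sum_congr rfl fun e _ => Finsupp.single_apply
  rw [hcard]
  cases w with
  | inl i =>
    refine (congrArg card (filter_congr fun e _ => ?_)).trans_le (hU i)
    by_cases h : ori e <;> simp [head, h]
  | inr j =>
    refine (congrArg card (filter_congr fun e _ => ?_)).trans_le (hV j)
    by_cases h : ori e <;> simp [head, h]

end BipartitePolynomial

open BipartitePolynomial

/-- For a finite bipartite simple graph with classes `u₁, …, u_m` and `v₁, …, vₙ`,
edge set `E`, equipped with an orientation in which every vertex has indegree at
most `k` (`ori e = true` means the head of `e` is its endpoint in the first class),
and any `q`, the polynomial `P = ∏_{uᵢvⱼ ∈ E} (q(uᵢ) + S(uᵢ) − q(vⱼ) − S(vⱼ))` has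
total degree equal to the number of edges, and `P` has a monomial with nonzero
coefficient in which every variable occurs with exponent at most `k`. -/
theorem bipartite_polynomial_monomial
    (m n k : ℕ) (E : Finset (Fin m × Fin n)) (qu : Fin m → ℝ) (qv : Fin n → ℝ)
    (ori : Fin m × Fin n → Bool)
    (hU : ∀ i : Fin m, (E.filter fun e => e.1 = i ∧ ori e = true).card ≤ k)
    (hV : ∀ j : Fin n, (E.filter fun e => e.2 = j ∧ ori e = false).card ≤ k) :
    (bipPoly m n E qu qv).totalDegree = E.card ∧
    ∃ d : (Fin m ⊕ Fin n) →₀ ℕ, (bipPoly m n E qu qv).coeff d ≠ 0 ∧ ∀ w, d w ≤ k := by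
  rw [bipPoly_eq_prod_edgeFactor]
  have htop : TopTwistedNonneg xSign E.card (∏ e ∈ E, edgeFactor E qu qv e) := by
    simpa using TopTwistedNonneg.prod fun e _ => topTwistedNonneg_edgeFactor E qu qv e
  have hpos : 0 < twistedCoeff xSign (indegree E ori) (∏ e ∈ E, edgeFactor E qu qv e) :=
    TopTwistedNonneg.twistedCoeff_prod_pos (fun e _ => topTwistedNonneg_edgeFactor E qu qv e)
      (fun e _ => Finsupp.degree_single _ _)
      (fun e he => twistedCoeff_edgeFactor_head_pos E qu qv e ori he)
  have hcoeff := coeff_ne_zero_of_twistedCoeff_ne_zero hpos.ne'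
  refine ⟨htop.1.antisymm ?_, indegree E ori, hcoeff, indegree_le E hU hV⟩
  rw [← degree_indegree E ori]
  exact le_totalDegree (mem_support_iff.mpr hcoeff)
end

section
/- Let A be a finite abelian group with |A| = k ≥ 3. For a finite simple graph G with vertex set {v₁, …, vₙ}, let G′ be the graph obtained from G by adding n new vertices v₁′, …, vₙ′ and the n new edges vᵢvᵢ′ for i = 1, …, n. Then G has a proper vertex coloring with k colors if and only if G′ has an additive coloring over A. -/
/-- `f` is an additive coloring of `G` with values in the abelian group `M`:
adjacent vertices have different neighborhood sums. -/
def IsAddColoring {V : Type*} [Fintype V] {M : Type*} [AddCommMonoid M]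
    (G : SimpleGraph V) (f : V → M) : Prop :=
  ∀ ⦃u v : V⦄, G.Adj u v → nsum G f u ≠ nsum G f v

/-- The graph `G'` obtained from `G` (on vertex set `V`, copied as `Sum.inl`) by adding,
for each vertex `vᵢ`, a new pendant vertex `vᵢ'` (copied as `Sum.inr`) joined to `vᵢ`
by an edge. -/
def pendantGraph {V : Type*} (G : SimpleGraph V) : SimpleGraph (V ⊕ V) where
  Adj x y :=
    match x, y with
    | Sum.inl u, Sum.inl v => G.Adj u v
    | Sum.inl u, Sum.inr v => u = v
    | Sum.inr u, Sum.inl v => v = u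
    | Sum.inr _, Sum.inr _ => False
  symm := by
    refine ⟨?_⟩
    rintro (u | u) (v | v) h
    · exact G.adj_symm h
    · exact h
    · exact h
    · exact h.elim
  loopless := by
    refine ⟨?_⟩
    rintro (u | u) h
    · exact G.irrefl h
    · exact h.elim

/-! The pendant vertex `vᵢ'` has the single neighbor `vᵢ`, so its neighborhood sum is the
value at `vᵢ`, and the value at `vᵢ'` can then be chosen to give the sum at `vᵢ` any prescribed
color `c vᵢ`. If `c` is a proper coloring by elements of `A`, the sums at `vᵢ` are `c vᵢ` and the
sums at `vᵢ'` are `c vᵢ + b` for a fixed `b ≠ 0`, which is an additive coloring of `G'`.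
Conversely the sums at the vertices `vᵢ` of an additive coloring of `G'` properly color `G`. -/

section pendantGraph

variable {V : Type*} (G : SimpleGraph V)

@[simp] lemma pendantGraph_adj_inl_inl {u v : V} :
    (pendantGraph G).Adj (Sum.inl u) (Sum.inl v) ↔ G.Adj u v := .rfl

@[simp] lemma pendantGraph_adj_inl_inr {u v : V} :
    (pendantGraph G).Adj (Sum.inl u) (Sum.inr v) ↔ u = v := .rfl

@[simp] lemma pendantGraph_adj_inr_inl {u v : V} :
    (pendantGraph G).Adj (Sum.inr u) (Sum.inl v) ↔ v = u := .rfl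

@[simp] lemma pendantGraph_not_adj_inr_inr {u v : V} :
    ¬(pendantGraph G).Adj (Sum.inr u) (Sum.inr v) := id

variable [Fintype V]

section AddCommMonoid

variable {M : Type*} [AddCommMonoid M]

lemma nsum_pendantGraph_inr (f : V ⊕ V → M) (u : V) :
    nsum (pendantGraph G) f (Sum.inr u) = f (Sum.inl u) := by
  classical
  have hN : (pendantGraph G).neighborFinset (Sum.inr u) = {Sum.inl u} := by
    ext (v | v) <;> simp [eq_comm]
  rw [nsum, hN, Finset.sum_singleton]

lemma nsum_pendantGraph_inl (f : V ⊕ V → M) (u : V) :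
    nsum (pendantGraph G) f (Sum.inl u) = nsum G (f ∘ Sum.inl) u + f (Sum.inr u) := by
  classical
  have hN : (pendantGraph G).neighborFinset (Sum.inl u) =
      insert (Sum.inr u) ((G.neighborFinset u).map .inl) := by
    ext (v | v) <;> simp [eq_comm]
  rw [nsum, hN, Finset.sum_insert (by simp), Finset.sum_map, add_comm]
  rfl

noncomputable def IsAddColoring.pendantColoring {f : V ⊕ V → M}
    (hf : IsAddColoring (pendantGraph G) f) : G.Coloring M :=
  SimpleGraph.Coloring.mk (fun u => nsum (pendantGraph G) f (Sum.inl u)) fun h => hf h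

end AddCommMonoid

section AddCommGroup

variable {A : Type*} [AddCommGroup A]

noncomputable def pendantLift (c : V → A) (b : A) : V ⊕ V → A :=
  Sum.elim (fun u => c u + b) fun u => c u - nsum G (fun v => c v + b) u

lemma nsum_pendantLift_inl (c : V → A) (b : A) (u : V) :
    nsum (pendantGraph G) (pendantLift G c b) (Sum.inl u) = c u := by
  rw [nsum_pendantGraph_inl]
  exact add_sub_cancel _ _

lemma nsum_pendantLift_inr (c : V → A) (b : A) (u : V) :
    nsum (pendantGraph G) (pendantLift G c b) (Sum.inr u) = c u + b :=
  nsum_pendantGraph_inr G _ u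

lemma isAddColoring_pendantLift (C : G.Coloring A) {b : A} (hb : b ≠ 0) :
    IsAddColoring (pendantGraph G) (pendantLift G C b) := by
  rintro (u | u) (v | v) h
  · simpa only [nsum_pendantLift_inl] using C.valid h
  · obtain rfl : u = v := h
    simpa only [nsum_pendantLift_inl, nsum_pendantLift_inr, ne_eq, left_eq_add]
  · obtain rfl : v = u := h
    simpa only [nsum_pendantLift_inl, nsum_pendantLift_inr, ne_eq, add_eq_left]
  · exact h.elim

end AddCommGroup

end pendantGraph

/-- Let `A` be a finite abelian group with `|A| = k ≥ 3`. A finite simple graph `G`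
has a proper vertex coloring with `k` colors if and only if the graph `G'` obtained
from `G` by attaching a pendant vertex to each vertex has an additive coloring
over `A`. -/
theorem colorable_iff_pendant_additive_coloring
    {V : Type*} [Fintype V] (G : SimpleGraph V)
    {A : Type*} [AddCommGroup A] [Fintype A] (k : ℕ)
    (hcard : Fintype.card A = k) (hk : 3 ≤ k) :
    G.Colorable k ↔ ∃ f : V ⊕ V → A, IsAddColoring (pendantGraph G) f := by
  constructor
  · intro hG
    obtain ⟨b, hb⟩ := Fintype.exists_ne_of_one_lt_card (by omega) (0 : A)
    exact ⟨_, isAddColoring_pendantLift G (hG.toColoring hcard.ge) hb⟩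
  · rintro ⟨f, hf⟩
    exact hcard ▸ hf.pendantColoring.colorable
end
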